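/- arXiv:2307.08799 — 5 statements merged into one kernel-verified Lean document; each statement's English description precedes it below -/
import Mathlib

section
/- Let ħ > 0 and let χ₀ : ℝ^{2n} → ℂ be continuously differentiable. Define χ(t,ξ) = χ₀(R_t^T ξ) · exp(−(1/(2ħ)) ξ·D_t ξ). Then χ(0,ξ) = χ₀(ξ) for all ξ, and χ satisfies the partial differential equation ∂_t χ(t,ξ) = (A^T ξ)·∇_ξ χ(t,ξ) − (1/(2ħ)) (ξ·Mξ) χ(t,ξ) for all t ∈ ℝ and ξ ∈ ℝ^{2n}. -/
open Matrix intervalIntegral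
open NormedSpace (exp)

/-!
Along the linear flow `h ↦ exp (h • Aᵀ) *ᵥ ξ` the characteristic function satisfies the cocycle
identity `χ (t + h) ξ = χ t (exp (h • Aᵀ) *ᵥ ξ) * exp (-(1 / (2ħ)) ξ ⬝ᵥ D_h ξ)`. The exponential
factor comes from writing `ξ ⬝ᵥ D_t ξ = ∫₀ᵗ (exp (s • Aᵀ) *ᵥ ξ) ⬝ᵥ M *ᵥ (exp (s • Aᵀ) *ᵥ ξ) ds`,
so that moving `ξ` along the flow by `h` shifts the interval of integration to `[h, h + t]`.
Differentiating the cocycle identity at `h = 0` gives the equation: the chain rule along the flow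
produces the transport term `(Aᵀ ξ) · ∇χ`, and `d/dh (ξ ⬝ᵥ D_h ξ) = ξ ⬝ᵥ M ξ` at `h = 0` produces
the damping term.
-/

theorem hasDerivAt_of_forall_add_eq_comp_mul {E 𝔸 : Type*} [NormedAddCommGroup E] [NormedSpace ℝ E]
    [NormedRing 𝔸] [NormedAlgebra ℝ 𝔸] {f : ℝ → E → 𝔸} {γ : ℝ → E} {g : ℝ → 𝔸}
    {t : ℝ} {ξ v : E} {g' : 𝔸} (hf : DifferentiableAt ℝ (f t) ξ) (hγ : HasDerivAt γ v 0)
    (hg : HasDerivAt g g' 0) (hγ₀ : γ 0 = ξ) (hg₀ : g 0 = 1)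
    (hflow : ∀ h, f (t + h) ξ = f t (γ h) * g h) :
    HasDerivAt (fun τ => f τ ξ) (fderiv ℝ (f t) ξ v + f t ξ * g') t := by
  have hcomp : HasDerivAt (fun h => f t (γ h) * g h) (fderiv ℝ (f t) ξ v + f t ξ * g') 0 := by
    rw [← hγ₀] at hf ⊢
    simpa [Function.comp_def, hg₀] using (hf.hasFDerivAt.comp_hasDerivAt 0 hγ).fun_mul hg
  simp_rw [← hflow, ← neg_add_cancel t] at hcomp
  simpa using hcomp.comp_const_add (-t) t

namespace Matrix

variable {ι : Type*} [Fintype ι] [DecidableEq ι]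

theorem hasDerivAt_exp_smul_mulVec (A : Matrix ι ι ℝ) (ξ : ι → ℝ) (t : ℝ) :
    HasDerivAt (fun s : ℝ => exp (s • A) *ᵥ ξ)
      (exp (t • A) *ᵥ (A *ᵥ ξ)) t := by
  rw [mulVec_mulVec]
  open scoped Norms.Operator in
  exact (LinearMap.toContinuousLinearMap ((mulVecBilin ℝ ℝ).flip ξ)).hasFDerivAt.comp_hasDerivAt t
    (hasDerivAt_exp_smul_const A t)

theorem exp_smul_mulVec_exp_smul_mulVec (A : Matrix ι ι ℝ) (s t : ℝ) (ξ : ι → ℝ) :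
    exp (s • A) *ᵥ (exp (t • A) *ᵥ ξ) = exp ((s + t) • A) *ᵥ ξ := by
  rw [mulVec_mulVec, add_smul,
    exp_add_of_commute _ _ ((Commute.refl A).smul_left s |>.smul_right t)]

theorem continuous_exp_smul (A : Matrix ι ι ℝ) : Continuous fun s : ℝ => exp (s • A) := by
  open scoped Norms.Operator in
  exact NormedSpace.exp_continuous.comp (continuous_id.smul continuous_const)

theorem transpose_exp_smul (A : Matrix ι ι ℝ) (t : ℝ) : (exp (t • A))ᵀ = exp (t • Aᵀ) := by
  rw [← exp_transpose, transpose_smul]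

theorem continuous_dotProduct_exp_smul_mulVec (A M : Matrix ι ι ℝ) (ξ : ι → ℝ) :
    Continuous fun s : ℝ => (exp (s • A) *ᵥ ξ) ⬝ᵥ M *ᵥ (exp (s • A) *ᵥ ξ) := by
  have := continuous_exp_smul A
  fun_prop

noncomputable def expGramian (A M : Matrix ι ι ℝ) (t : ℝ) : Matrix ι ι ℝ :=
  of fun i j => ∫ s in (0:ℝ)..t, (exp (s • A) * M * (exp (s • A))ᵀ) i j

@[simp] theorem expGramian_zero (A M : Matrix ι ι ℝ) : expGramian A M 0 = 0 := by
  ext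
  simp [expGramian]

theorem dotProduct_expGramian_mulVec (A M : Matrix ι ι ℝ) (t : ℝ) (ξ : ι → ℝ) :
    ξ ⬝ᵥ expGramian A M t *ᵥ ξ = ∫ s in (0:ℝ)..t,
      (exp (s • Aᵀ) *ᵥ ξ) ⬝ᵥ M *ᵥ (exp (s • Aᵀ) *ᵥ ξ) := by
  set G := fun s : ℝ => exp (s • A) * M * (exp (s • A))ᵀ
  have hG : ∀ i j, Continuous fun s => ξ i * G s i j * ξ j := fun i j => by
    have := continuous_exp_smul A
    fun_prop
  have hGξ : ∀ s, (exp (s • Aᵀ) *ᵥ ξ) ⬝ᵥ M *ᵥ (exp (s • Aᵀ) *ᵥ ξ) = ξ ⬝ᵥ G s *ᵥ ξ := fun s => by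
    simp only [G, ← transpose_exp_smul, ← mulVec_mulVec, mulVec_transpose, dotProduct_mulVec]
  have hsum : ∀ X : Matrix ι ι ℝ, ξ ⬝ᵥ X *ᵥ ξ = ∑ i, ∑ j, ξ i * X i j * ξ j := fun X => by
    rw [← toLinearMap₂'_apply', toLinearMap₂'_apply]
    exact Finset.sum_congr rfl fun i _ => Finset.sum_congr rfl fun j _ => by
      rw [smul_eq_mul, smul_eq_mul]; ring
  simp_rw [hGξ, hsum]
  rw [integral_finsetSum fun i _ =>
    (continuous_finsetSum _ fun j _ => hG i j).intervalIntegrable 0 t]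
  refine Finset.sum_congr rfl fun i _ => ?_
  rw [integral_finsetSum fun j _ => (hG i j).intervalIntegrable 0 t]
  refine Finset.sum_congr rfl fun j _ => ?_
  rw [integral_mul_const, integral_const_mul]
  rfl

theorem dotProduct_expGramian_mulVec_exp_smul_mulVec (A M : Matrix ι ι ℝ) (h t : ℝ) (ξ : ι → ℝ) :
    (exp (h • Aᵀ) *ᵥ ξ) ⬝ᵥ expGramian A M t *ᵥ (exp (h • Aᵀ) *ᵥ ξ)
      = ξ ⬝ᵥ expGramian A M (h + t) *ᵥ ξ - ξ ⬝ᵥ expGramian A M h *ᵥ ξ := by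
  let φ := fun s : ℝ => (exp (s • Aᵀ) *ᵥ ξ) ⬝ᵥ M *ᵥ (exp (s • Aᵀ) *ᵥ ξ)
  have hφ : Continuous φ := continuous_dotProduct_exp_smul_mulVec Aᵀ M ξ
  simp only [dotProduct_expGramian_mulVec, exp_smul_mulVec_exp_smul_mulVec]
  rw [integral_interval_sub_left (hφ.intervalIntegrable _ _) (hφ.intervalIntegrable _ _)]
  exact (integral_comp_add_right φ h).trans (by rw [zero_add, add_comm])

theorem hasDerivAt_dotProduct_expGramian_mulVec (A M : Matrix ι ι ℝ) (ξ : ι → ℝ) (t : ℝ) :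
    HasDerivAt (fun τ => ξ ⬝ᵥ expGramian A M τ *ᵥ ξ)
      ((exp (t • Aᵀ) *ᵥ ξ) ⬝ᵥ M *ᵥ (exp (t • Aᵀ) *ᵥ ξ)) t := by
  simp only [dotProduct_expGramian_mulVec]
  exact ((continuous_dotProduct_exp_smul_mulVec Aᵀ M ξ).integral_hasStrictDerivAt 0 t).hasDerivAt

end Matrix

theorem characteristic_function_evolution_general (n : ℕ)
    (A M : Matrix (Fin (2 * n)) (Fin (2 * n)) ℝ)
    (R : ℝ → Matrix (Fin (2 * n)) (Fin (2 * n)) ℝ)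
    (hR : ∀ t, R t = NormedSpace.exp (t • A))
    (D : ℝ → Matrix (Fin (2 * n)) (Fin (2 * n)) ℝ)
    (hD : ∀ t, D t = Matrix.of fun i j => ∫ s in (0:ℝ)..t, (R s * M * (R s)ᵀ) i j)
    (hbar : ℝ)
    (χ₀ : (Fin (2 * n) → ℝ) → ℂ) (hχ₀ : ContDiff ℝ 1 χ₀)
    (χ : ℝ → (Fin (2 * n) → ℝ) → ℂ)
    (hχ : ∀ t ξ, χ t ξ =
      χ₀ ((R t)ᵀ.mulVec ξ) * Complex.exp (-(1 / (2 * hbar) : ℝ) * (ξ ⬝ᵥ (D t).mulVec ξ))) :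
    (∀ ξ, χ 0 ξ = χ₀ ξ) ∧
      ∀ t ξ, HasDerivAt (fun τ => χ τ ξ)
        (fderiv ℝ (χ t) ξ (Aᵀ.mulVec ξ)
          - (1 / (2 * hbar) : ℝ) * ((ξ ⬝ᵥ M.mulVec ξ : ℝ) : ℂ) * χ t ξ) t := by
  obtain rfl : R = fun t => exp (t • A) := funext hR
  obtain rfl : D = expGramian A M := funext hD
  simp only [transpose_exp_smul] at hχ
  refine ⟨fun ξ => by simp [hχ], fun t ξ => ?_⟩
  set c : ℂ := -((1 / (2 * hbar) : ℝ) : ℂ) with hc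
  have hflow : ∀ h, χ (t + h) ξ = χ t (exp (h • Aᵀ) *ᵥ ξ)
      * Complex.exp (c * (ξ ⬝ᵥ expGramian A M h *ᵥ ξ : ℝ)) := fun h => by
    simp only [hχ, exp_smul_mulVec_exp_smul_mulVec, dotProduct_expGramian_mulVec_exp_smul_mulVec]
    rw [add_comm h t, mul_assoc, ← Complex.exp_add]
    congr 2
    push_cast
    ring
  have hdiff : DifferentiableAt ℝ (χ t) ξ := by
    rw [funext (hχ t)]
    have := hχ₀.differentiable one_ne_zero
    have : Differentiable ℝ (exp (t • Aᵀ) *ᵥ ·) :=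
      (LinearMap.toContinuousLinearMap (mulVecLin (exp (t • Aᵀ)))).differentiable
    simp only [dotProduct, mulVec]
    fun_prop
  have hg : HasDerivAt (fun h => Complex.exp (c * (ξ ⬝ᵥ expGramian A M h *ᵥ ξ : ℝ)))
      (c * (ξ ⬝ᵥ M *ᵥ ξ : ℝ)) 0 := by
    simpa using (((hasDerivAt_dotProduct_expGramian_mulVec A M ξ 0).ofReal_comp).const_mul c).cexp
  refine (hasDerivAt_of_forall_add_eq_comp_mul hdiff
    (by simpa using hasDerivAt_exp_smul_mulVec Aᵀ ξ 0) hg (by simp) (by simp) hflow).congr_deriv ?_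
  rw [hc]
  ring

/-- with `χ(t,ξ) = χ₀(R_tᵀ ξ) exp(-(1/(2hbar)) ξ·D_t ξ)` one has
`χ(0,·) = χ₀` and `∂_t χ(t,ξ) = (Aᵀξ)·∇_ξ χ(t,ξ) - (1/(2hbar)) (ξ·Mξ) χ(t,ξ)`. -/
theorem characteristic_function_evolution (n : ℕ) (hn : 1 ≤ n)
    (A M : Matrix (Fin (2 * n)) (Fin (2 * n)) ℝ) (hM : M.IsSymm)
    (R : ℝ → Matrix (Fin (2 * n)) (Fin (2 * n)) ℝ)
    (hR : ∀ t, R t = NormedSpace.exp (t • A))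
    (D : ℝ → Matrix (Fin (2 * n)) (Fin (2 * n)) ℝ)
    (hD : ∀ t, D t = Matrix.of fun i j => ∫ s in (0:ℝ)..t, (R s * M * (R s)ᵀ) i j)
    (hbar : ℝ) (hhbar : 0 < hbar)
    (χ₀ : (Fin (2 * n) → ℝ) → ℂ) (hχ₀ : ContDiff ℝ 1 χ₀)
    (χ : ℝ → (Fin (2 * n) → ℝ) → ℂ)
    (hχ : ∀ t ξ, χ t ξ =
      χ₀ ((R t)ᵀ.mulVec ξ) * Complex.exp (-(1 / (2 * hbar) : ℝ) * (ξ ⬝ᵥ (D t).mulVec ξ))) :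
    (∀ ξ, χ 0 ξ = χ₀ ξ) ∧
      ∀ t ξ, HasDerivAt (fun τ => χ τ ξ)
        (fderiv ℝ (χ t) ξ (Aᵀ.mulVec ξ)
          - (1 / (2 * hbar) : ℝ) * ((ξ ⬝ᵥ M.mulVec ξ : ℝ) : ℂ) * χ t ξ) t :=
  characteristic_function_evolution_general n A M R hR D hD hbar χ₀ hχ₀ χ hχ
end

section
/- Define subspaces U_j ⊆ ℝ^{2n} recursively by U_0 = V_0 and U_j = U_{j−1} + A·U_{j−1}. Then for every j ≥ 0 one has U_j = V_0 + F V_0 + F² V_0 + ⋯ + F^j V_0. -/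
open Matrix

private lemma vmv_mulVec {m : Type*} [Fintype m] (a b w : m → ℝ) :
    (vecMulVec a b).mulVec w = (b ⬝ᵥ w) • a := by
  ext i
  simp [mulVec, vecMulVec_apply, dotProduct, Finset.mul_sum, mul_comm, mul_assoc, mul_left_comm]

private lemma sum_mulVec' {ι m : Type*} [Fintype m] (s : Finset ι) (M : ι → Matrix m m ℝ)
    (w : m → ℝ) : (∑ k ∈ s, M k) *ᵥ w = ∑ k ∈ s, M k *ᵥ w := by
  ext i
  simp only [mulVec, dotProduct, Matrix.sum_apply, Finset.sum_apply, Finset.sum_mul]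
  rw [Finset.sum_comm]

private lemma biSup_range_succ {α : Type*} [CompleteLattice α] (f : ℕ → α) (j : ℕ) :
    ⨆ m ∈ Finset.range (j + 2), f m
      = (⨆ m ∈ Finset.range (j + 1), f m) ⊔ (⨆ m ∈ Finset.range (j + 1), f (m + 1)) := by
  apply le_antisymm
  · refine iSup₂_le fun m hm => ?_
    rcases Nat.lt_or_ge m (j + 1) with h | h
    · exact le_sup_of_le_left (le_biSup f (Finset.mem_range.2 h))
    · have hm1 := Finset.mem_range.1 hm
      have hm' : m = (m - 1) + 1 := by omega
      rw [hm']
      exact le_sup_of_le_right (le_biSup (fun m => f (m + 1)) (Finset.mem_range.2 (by omega)))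
  · exact sup_le
      (iSup₂_le fun m hm => le_biSup f
        (Finset.mem_range.2 (by have := Finset.mem_range.1 hm; omega)))
      (iSup₂_le fun m hm => le_biSup f
        (Finset.mem_range.2 (by have := Finset.mem_range.1 hm; omega)))

/-- with `U₀ = V₀` and `U_j = U_{j-1} + A·U_{j-1}`, where `A = F + NΩ`,
`F = ΩQ` with `Q` symmetric, `N = Σ Re l_k (Im l_k)ᵀ - Im l_k (Re l_k)ᵀ` and
`V₀ = span{Re l_k, Im l_k}`, one has `U_j = V₀ + F V₀ + ⋯ + Fʲ V₀` for all `j`. -/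
theorem iterated_bracket_spaces (n K : ℕ) (hn : 1 ≤ n)
    (Ω : Matrix (Fin n ⊕ Fin n) (Fin n ⊕ Fin n) ℝ)
    (hΩ : Ω = Matrix.fromBlocks 0 (-1) 1 0)
    (Q : Matrix (Fin n ⊕ Fin n) (Fin n ⊕ Fin n) ℝ) (hQ : Q.IsSymm)
    (F : Matrix (Fin n ⊕ Fin n) (Fin n ⊕ Fin n) ℝ) (hF : F = Ω * Q)
    (l : Fin K → (Fin n ⊕ Fin n) → ℂ)
    (N : Matrix (Fin n ⊕ Fin n) (Fin n ⊕ Fin n) ℝ)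
    (hN : N = ∑ k, (vecMulVec (fun i => (l k i).re) (fun i => (l k i).im)
                  - vecMulVec (fun i => (l k i).im) (fun i => (l k i).re)))
    (A : Matrix (Fin n ⊕ Fin n) (Fin n ⊕ Fin n) ℝ) (hA : A = F + N * Ω)
    (V₀ : Submodule ℝ ((Fin n ⊕ Fin n) → ℝ))
    (hV₀ : V₀ = Submodule.span ℝ
      (Set.range (fun k => fun i => (l k i).re) ∪ Set.range (fun k => fun i => (l k i).im)))
    (U : ℕ → Submodule ℝ ((Fin n ⊕ Fin n) → ℝ))
    (hU0 : U 0 = V₀)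
    (hUsucc : ∀ j : ℕ, U (j + 1) = U j ⊔ Submodule.map A.mulVecLin (U j)) :
    ∀ j : ℕ, U j = ⨆ m ∈ Finset.range (j + 1), Submodule.map (F ^ m).mulVecLin V₀ := by
  have hNmem : ∀ v, (N * Ω).mulVec v ∈ V₀ := by
    intro v
    rw [← Matrix.mulVec_mulVec, hN, sum_mulVec']
    apply Submodule.sum_mem
    intro k _
    rw [Matrix.sub_mulVec, vmv_mulVec, vmv_mulVec]
    refine Submodule.sub_mem _ (Submodule.smul_mem _ _ ?_) (Submodule.smul_mem _ _ ?_)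
    · rw [hV₀]; exact Submodule.subset_span (Or.inl ⟨k, rfl⟩)
    · rw [hV₀]; exact Submodule.subset_span (Or.inr ⟨k, rfl⟩)
  set g : ℕ → Submodule ℝ ((Fin n ⊕ Fin n) → ℝ) :=
    fun m => Submodule.map (F ^ m).mulVecLin V₀ with hg
  have hV₀le : ∀ j, V₀ ≤ ⨆ m ∈ Finset.range (j + 1), g m := by
    intro j
    have h0 : g 0 = V₀ := by
      rw [hg]; simp [Matrix.mulVecLin_one, Submodule.map_id]
    rw [← h0]
    exact le_biSup g (Finset.mem_range.2 (Nat.succ_pos j))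
  have hmapF : ∀ j, Submodule.map F.mulVecLin (⨆ m ∈ Finset.range (j + 1), g m)
      = ⨆ m ∈ Finset.range (j + 1), g (m + 1) := by
    intro j
    simp only [Submodule.map_iSup]
    refine iSup_congr fun m => iSup_congr fun _ => ?_
    rw [hg]
    simp only [← Submodule.map_comp, ← Matrix.mulVecLin_mul, ← pow_succ']
  intro j
  induction j with
  | zero =>
    rw [hU0]
    have h0 : g 0 = V₀ := by
      rw [hg]; simp [Matrix.mulVecLin_one, Submodule.map_id]
    rw [show (0 : ℕ) + 1 = 1 from rfl]
    rw [show (⨆ m ∈ Finset.range 1, g m) = g 0 by simp]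
    exact h0.symm
  | succ j ih =>
    rw [hUsucc, ih]
    have key : (⨆ m ∈ Finset.range (j + 1), g m)
        ⊔ Submodule.map A.mulVecLin (⨆ m ∈ Finset.range (j + 1), g m)
        = (⨆ m ∈ Finset.range (j + 1), g m)
        ⊔ Submodule.map F.mulVecLin (⨆ m ∈ Finset.range (j + 1), g m) := by
      set S := ⨆ m ∈ Finset.range (j + 1), g m with hS
      have hVS : V₀ ≤ S := hV₀le j
      apply le_antisymm
      · refine sup_le le_sup_left ?_
        rintro _ ⟨x, hx, rfl⟩
        have hAx : A.mulVecLin x = F.mulVecLin x + (N * Ω).mulVec x := by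
          simp [hA, Matrix.mulVecLin_apply, Matrix.add_mulVec]
        rw [hAx]
        exact Submodule.add_mem _
          (Submodule.mem_sup_right ⟨x, hx, rfl⟩)
          (Submodule.mem_sup_left (hVS (hNmem x)))
      · refine sup_le le_sup_left ?_
        rintro _ ⟨x, hx, rfl⟩
        have hFx : F.mulVecLin x = A.mulVecLin x - (N * Ω).mulVec x := by
          simp [hA, Matrix.mulVecLin_apply, Matrix.add_mulVec]
        rw [hFx]
        exact Submodule.sub_mem _
          (Submodule.mem_sup_right ⟨x, hx, rfl⟩)
          (Submodule.mem_sup_left (hVS (hNmem x)))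
    rw [key, hmapF, show j + 1 + 1 = j + 2 from rfl, biSup_range_succ g j]
end

section
/- Let k ≥ 1 and let ξ ∈ ℝ^{2n} be orthogonal to V_{k−1}. Then ξ^T A^j M = 0 for every j with 0 ≤ j ≤ k−1, and ξ^T A^k M = ξ^T F^k M. -/
open Matrix

lemma vecMul_vecMulVec' {m : Type*} [Fintype m] [DecidableEq m]
    (w a b : m → ℝ) : Matrix.vecMul w (vecMulVec a b) = (w ⬝ᵥ a) • b := by
  funext i
  simp [Matrix.vecMul, vecMulVec, dotProduct, Finset.sum_mul, mul_assoc]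


lemma vecMul_sum' {m : Type*} [Fintype m] {ι : Type*} (s : Finset ι)
    (w : m → ℝ) (f : ι → Matrix m m ℝ) :
    Matrix.vecMul w (∑ i ∈ s, f i) = ∑ i ∈ s, Matrix.vecMul w (f i) := by
  funext j
  simp [Matrix.vecMul, dotProduct, Matrix.sum_apply, Finset.mul_sum]
  rw [Finset.sum_comm]

/-- if `ξ ⊥ V_{k-1}` (k ≥ 1) then `ξᵀ Aʲ M = 0` for `0 ≤ j ≤ k-1`,
and `ξᵀ Aᵏ M = ξᵀ Fᵏ M`. -/
theorem xi_perp_annihilates (n K : ℕ) (hn : 1 ≤ n)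
    (Ω : Matrix (Fin n ⊕ Fin n) (Fin n ⊕ Fin n) ℝ)
    (hΩ : Ω = Matrix.fromBlocks 0 (-1) 1 0)
    (Q : Matrix (Fin n ⊕ Fin n) (Fin n ⊕ Fin n) ℝ) (hQ : Q.IsSymm)
    (F : Matrix (Fin n ⊕ Fin n) (Fin n ⊕ Fin n) ℝ) (hF : F = Ω * Q)
    (l : Fin K → (Fin n ⊕ Fin n) → ℂ)
    (M : Matrix (Fin n ⊕ Fin n) (Fin n ⊕ Fin n) ℝ)
    (hM : M = ∑ k, (vecMulVec (fun i => (l k i).re) (fun i => (l k i).re)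
                  + vecMulVec (fun i => (l k i).im) (fun i => (l k i).im)))
    (N : Matrix (Fin n ⊕ Fin n) (Fin n ⊕ Fin n) ℝ)
    (hN : N = ∑ k, (vecMulVec (fun i => (l k i).re) (fun i => (l k i).im)
                  - vecMulVec (fun i => (l k i).im) (fun i => (l k i).re)))
    (A : Matrix (Fin n ⊕ Fin n) (Fin n ⊕ Fin n) ℝ) (hA : A = F + N * Ω)
    (V₀ : Submodule ℝ ((Fin n ⊕ Fin n) → ℝ))
    (hV₀ : V₀ = Submodule.span ℝ
      (Set.range (fun k => fun i => (l k i).re) ∪ Set.range (fun k => fun i => (l k i).im)))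
    (V : ℕ → Submodule ℝ ((Fin n ⊕ Fin n) → ℝ))
    (hV : ∀ j : ℕ, V j = ⨆ m ∈ Finset.range (j + 1), Submodule.map (F ^ m).mulVecLin V₀)
    (k : ℕ) (hk : 1 ≤ k)
    (ξ : (Fin n ⊕ Fin n) → ℝ) (hξ : ∀ v ∈ V (k - 1), ξ ⬝ᵥ v = 0) :
    (∀ j : ℕ, j ≤ k - 1 → Matrix.vecMul ξ (A ^ j * M) = 0) ∧
      Matrix.vecMul ξ (A ^ k * M) = Matrix.vecMul ξ (F ^ k * M) := by
  -- ξ is orthogonal to F^m v for v ∈ V₀, m ≤ k-1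
  have hperp : ∀ m : ℕ, m ≤ k - 1 → ∀ v ∈ V₀, ξ ⬝ᵥ (F ^ m).mulVec v = 0 := by
    intro m hm v hv
    apply hξ
    rw [hV]
    have : (F ^ m).mulVec v ∈ Submodule.map (F ^ m).mulVecLin V₀ := ⟨v, hv, rfl⟩
    exact Submodule.mem_iSup_of_mem m (Submodule.mem_iSup_of_mem
      (Finset.mem_range.mpr (Nat.lt_succ_of_le hm)) this)
  have hre : ∀ q : Fin K, (fun i => (l q i).re) ∈ V₀ := by
    intro q; rw [hV₀]
    exact Submodule.subset_span (Or.inl ⟨q, rfl⟩)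
  have him : ∀ q : Fin K, (fun i => (l q i).im) ∈ V₀ := by
    intro q; rw [hV₀]
    exact Submodule.subset_span (Or.inr ⟨q, rfl⟩)
  -- dot products of ξᵀ F^m with the generators vanish
  have hdot : ∀ m : ℕ, m ≤ k - 1 → ∀ v ∈ V₀,
      Matrix.vecMul ξ (F ^ m) ⬝ᵥ v = 0 := by
    intro m hm v hv
    rw [← Matrix.dotProduct_mulVec]
    exact hperp m hm v hv
  have hFN : ∀ m : ℕ, m ≤ k - 1 → Matrix.vecMul (Matrix.vecMul ξ (F ^ m)) N = 0 := by
    intro m hm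
    rw [hN]
    rw [vecMul_sum' _ _ _]
    apply Finset.sum_eq_zero
    intro q _
    rw [Matrix.vecMul_sub, vecMul_vecMulVec', vecMul_vecMulVec',
      hdot m hm _ (hre q), hdot m hm _ (him q)]
    simp
  have hFM : ∀ m : ℕ, m ≤ k - 1 → Matrix.vecMul (Matrix.vecMul ξ (F ^ m)) M = 0 := by
    intro m hm
    rw [hM]
    rw [vecMul_sum' _ _ _]
    apply Finset.sum_eq_zero
    intro q _
    rw [Matrix.vecMul_add, vecMul_vecMulVec', vecMul_vecMulVec',
      hdot m hm _ (hre q), hdot m hm _ (him q)]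
    simp
  -- ξᵀ Aʲ = ξᵀ Fʲ for j ≤ k
  have hAF : ∀ j : ℕ, j ≤ k → Matrix.vecMul ξ (A ^ j) = Matrix.vecMul ξ (F ^ j) := by
    intro j
    induction j with
    | zero => intro _; rfl
    | succ j ih =>
      intro hj
      have hj' : j ≤ k - 1 := by omega
      have hjk : j ≤ k := by omega
      rw [pow_succ, pow_succ, ← Matrix.vecMul_vecMul, ← Matrix.vecMul_vecMul,
        ih hjk, hA, Matrix.vecMul_add, ← Matrix.vecMul_vecMul, hFN j hj']
      simp
  constructor
  · intro j hj
    rw [← Matrix.vecMul_vecMul, hAF j (by omega), hFM j hj]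
  · rw [← Matrix.vecMul_vecMul, hAF k le_rfl, Matrix.vecMul_vecMul]
end

section
/- Let k ≥ 1 and suppose ξ ∈ ℝ^{2n} is orthogonal to V_{k−1}. Then the function t ↦ ξ·D_t ξ has vanishing derivatives of all orders j ≤ 2k at t = 0, and its (2k+1)-st derivative at t = 0 equals binom(2k,k) · ξ^T F^k M (F^T)^k ξ. -/
open Matrix MeasureTheory intervalIntegral

/-!
Write `f t = ξ ⬝ᵥ D t *ᵥ ξ = ∫₀ᵗ ξᵀ e^{sA} M e^{sAᵀ} ξ ds`. Differentiating the integrand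
`s ↦ e^{sA} C e^{sAᵀ}` replaces `C` by `AC + CAᵀ`, and left and right multiplication commute,
so `f⁽ᵖ⁺¹⁾(0) = ∑ᵢ C(p,i) ξᵀ Aⁱ M (Aᵀ)ᵖ⁻ⁱ ξ`.

Orthogonality of `ξ` to `Fⁱ V₀` for `i < k` means that the row vectors `ξᵀ Fⁱ` kill every
`Re lκ` and `Im lκ`, hence `ξᵀ Fⁱ M = 0` and `ξᵀ Fⁱ N = 0`. The latter gives `ξᵀ Aⁱ = ξᵀ Fⁱ` for
`i ≤ k`, so `ξᵀ Aⁱ M = 0` for `i < k`, and by symmetry of `M` each term with `i < k` or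
`p - i < k` vanishes. For `p < 2k` that is every term; for `p = 2k` only `i = k` survives.
-/

section ExpSandwich

open NormedSpace

theorem LinearMap.mulLeft_add_mulRight_pow_apply (R : Type*) {A : Type*} [CommSemiring R]
    [Semiring A] [Algebra R A] (a b c : A) (p : ℕ) :
    ((mulLeft R a + mulRight R b) ^ p) c =
      ∑ i ∈ Finset.range (p + 1), p.choose i • (a ^ i * c * b ^ (p - i)) := by
  rw [(commute_mulLeft_right a b).add_pow, sum_apply]
  refine Finset.sum_congr rfl fun i _ => ?_
  rw [Module.End.mul_apply, Module.End.mul_apply, Module.End.natCast_apply, pow_mulLeft,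
    pow_mulRight, mulRight_apply, mulLeft_apply, smul_mul_assoc, mul_smul_comm, mul_assoc]

variable {𝕂 𝔸 F : Type*} [RCLike 𝕂] [NormedRing 𝔸] [NormedAlgebra 𝕂 𝔸] [CompleteSpace 𝔸]
  [NormedAddCommGroup F] [NormedSpace 𝕂 F]

theorem hasDerivAt_exp_smul_mul_mul_exp_smul (a b c : 𝔸) (t : 𝕂) :
    HasDerivAt (fun s : 𝕂 => exp (s • a) * c * exp (s • b))
      (exp (t • a) * (a * c + c * b) * exp (t • b)) t := by
  convert ((hasDerivAt_exp_smul_const a t).mul_const c).fun_mul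
    (hasDerivAt_exp_smul_const' b t) using 1
  simp only [mul_add, add_mul, mul_assoc]

theorem iteratedDeriv_exp_smul_mul_mul_exp_smul (φ : 𝔸 →L[𝕂] F) (a b : 𝔸) (p : ℕ) (c : 𝔸) :
    iteratedDeriv p (fun s : 𝕂 => φ (exp (s • a) * c * exp (s • b))) =
      fun s => φ (exp (s • a) * ((LinearMap.mulLeft 𝕂 a + LinearMap.mulRight 𝕂 b) ^ p) c *
        exp (s • b)) := by
  induction p generalizing c with
  | zero => simp
  | succ p ih =>
    have hderiv : deriv (fun s : 𝕂 => φ (exp (s • a) * c * exp (s • b))) =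
        fun s => φ (exp (s • a) * (a * c + c * b) * exp (s • b)) :=
      funext fun s => (φ.hasFDerivAt.comp_hasDerivAt s
        (hasDerivAt_exp_smul_mul_mul_exp_smul a b c s)).deriv
    rw [iteratedDeriv_succ', hderiv, ih, pow_succ]
    rfl

theorem iteratedDeriv_exp_smul_mul_mul_exp_smul_zero (φ : 𝔸 →L[𝕂] F) (a b c : 𝔸) (p : ℕ) :
    iteratedDeriv p (fun s : 𝕂 => φ (exp (s • a) * c * exp (s • b))) 0 =
      ∑ i ∈ Finset.range (p + 1), p.choose i • φ (a ^ i * c * b ^ (p - i)) := by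
  simp only [iteratedDeriv_exp_smul_mul_mul_exp_smul, zero_smul, exp_zero, one_mul, mul_one,
    LinearMap.mulLeft_add_mulRight_pow_apply, map_sum, map_nsmul]

end ExpSandwich

theorem iteratedDeriv_succ_intervalIntegral {E : Type*} [NormedAddCommGroup E] [NormedSpace ℝ E]
    [CompleteSpace E] {g : ℝ → E} (hg : Continuous g) (a : ℝ) (p : ℕ) :
    iteratedDeriv (p + 1) (fun t => ∫ s in a..t, g s) = iteratedDeriv p g := by
  rw [iteratedDeriv_succ', funext (hg.deriv_integral g a)]

theorem Finset.sum_range_choose_smul_eq_zero {M : Type*} [AddCommMonoid M] {T : ℕ → ℕ → M}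
    {k p : ℕ} (hT : ∀ i j, i < k ∨ j < k → T i j = 0) (hp : p < 2 * k) :
    ∑ i ∈ range (p + 1), p.choose i • T i (p - i) = 0 :=
  sum_eq_zero fun i _ => by rw [hT i (p - i) (by omega), smul_zero]

theorem Finset.sum_range_choose_smul_eq_middle {M : Type*} [AddCommMonoid M] {T : ℕ → ℕ → M}
    {k : ℕ} (hT : ∀ i j, i < k ∨ j < k → T i j = 0) :
    ∑ i ∈ range (2 * k + 1), (2 * k).choose i • T i (2 * k - i) = (2 * k).choose k • T k k := by
  have hoff : ∀ i ∈ range (2 * k + 1), i ≠ k → (2 * k).choose i • T i (2 * k - i) = 0 :=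
    fun i hi hik => by rw [mem_range] at hi; rw [hT i (2 * k - i) (by omega), smul_zero]
  rw [sum_eq_single k hoff (fun hk => absurd (mem_range.2 (by omega)) hk),
    show 2 * k - k = k by omega]

section MatrixLemmas

variable {m R : Type*} [Fintype m] [CommRing R]

theorem Matrix.vecMul_pow_dotProduct_eq_zero [DecidableEq m] {F : Matrix m m R}
    {V₀ : Submodule R (m → R)} {x : m → R} {j : ℕ}
    (hx : ∀ v ∈ ⨆ i ∈ Finset.range (j + 1), V₀.map (F ^ i).mulVecLin, x ⬝ᵥ v = 0)
    {i : ℕ} (hi : i ≤ j) {v : m → R} (hv : v ∈ V₀) :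
    x ᵥ* F ^ i ⬝ᵥ v = 0 := by
  rw [← dotProduct_mulVec]
  exact hx _ (Submodule.mem_iSup_of_mem i
    (Submodule.mem_iSup_of_mem (Finset.mem_range.2 (by omega)) ⟨v, hv, rfl⟩))

theorem Matrix.dotProduct_mul_mul_transpose_mulVec (X Y C : Matrix m m R) (x : m → R) :
    x ⬝ᵥ (X * C * Yᵀ) *ᵥ x = x ᵥ* X ⬝ᵥ C *ᵥ (x ᵥ* Y) := by
  rw [← mulVec_mulVec, ← mulVec_mulVec, mulVec_transpose, dotProduct_mulVec]

theorem Matrix.vecMul_add_pow_of_vecMul_pow_mul_eq_zero [DecidableEq m] {x : m → R}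
    {F E : Matrix m m R} {k : ℕ} (h : ∀ i < k, x ᵥ* F ^ i ᵥ* E = 0) :
    ∀ i ≤ k, x ᵥ* (F + E) ^ i = x ᵥ* F ^ i := by
  intro i hi
  induction i with
  | zero => rfl
  | succ i ih =>
    rw [pow_succ, pow_succ, ← vecMul_vecMul, ← vecMul_vecMul, ih (by omega), vecMul_add,
      h i (by omega), add_zero]

theorem Matrix.dotProduct_pow_mul_mul_transpose_pow_mulVec_eq_zero [DecidableEq m]
    {x : m → R} {A C : Matrix m m R} (hC : Cᵀ = C) {k : ℕ}
    (h : ∀ i < k, x ᵥ* A ^ i ᵥ* C = 0) {i j : ℕ} (hij : i < k ∨ j < k) :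
    x ⬝ᵥ (A ^ i * C * Aᵀ ^ j) *ᵥ x = 0 := by
  rw [← transpose_pow, dotProduct_mul_mul_transpose_mulVec]
  rcases hij with hi | hj
  · rw [dotProduct_mulVec, h i hi, zero_dotProduct]
  · rw [← hC, mulVec_transpose, h j hj, dotProduct_zero]

end MatrixLemmas

theorem Matrix.dotProduct_of_intervalIntegral_mulVec {m : Type*} [Fintype m]
    {G : ℝ → Matrix m m ℝ} (hG : Continuous G) (x : m → ℝ) (a b : ℝ) :
    x ⬝ᵥ (of fun i j => ∫ s in a..b, G s i j) *ᵥ x = ∫ s in a..b, x ⬝ᵥ G s *ᵥ x := by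
  -- `Matrix` carries no global norm, so integrate in the plain function space `m → m → ℝ`.
  let φ : (m → m → ℝ) →L[ℝ] ℝ := LinearMap.toContinuousLinearMap
    { toFun := fun X => x ⬝ᵥ of X *ᵥ x
      map_add' := fun X Y => by rw [← of_add_of, add_mulVec, dotProduct_add]
      map_smul' := fun c X => by rw [← smul_of, smul_mulVec, dotProduct_smul]; rfl }
  have hG' : IntervalIntegrable (fun s => of.symm (G s)) volume a b := hG.intervalIntegrable a b
  have hentries : (fun i j => ∫ s in a..b, G s i j) = ∫ s in a..b, of.symm (G s) := by
    ext i j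
    exact ((ContinuousLinearMap.proj (R := ℝ) (φ := fun _ : m => ℝ) j).comp
      (ContinuousLinearMap.proj (R := ℝ) (φ := fun _ : m => m → ℝ) i)).intervalIntegral_comp_comm
        hG'
  rw [hentries]
  exact (φ.intervalIntegral_comp_comm hG').symm

section MatrixCalculus

attribute [local instance] Matrix.linftyOpNormedAddCommGroup Matrix.linftyOpNormedRing
  Matrix.linftyOpNormedAlgebra

open NormedSpace

variable {m : Type*} [Fintype m]

noncomputable def Matrix.quadFormCLM (x : m → ℝ) : Matrix m m ℝ →L[ℝ] ℝ :=
  LinearMap.toContinuousLinearMap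
    { toFun := fun X => x ⬝ᵥ X *ᵥ x
      map_add' := fun X Y => by rw [add_mulVec, dotProduct_add]
      map_smul' := fun c X => by rw [smul_mulVec, dotProduct_smul]; rfl }

theorem Matrix.iteratedDeriv_succ_quadForm_integral_exp [DecidableEq m] (A C : Matrix m m ℝ)
    (x : m → ℝ) (p : ℕ) :
    iteratedDeriv (p + 1) (fun t => x ⬝ᵥ
        (of fun i j => ∫ s in (0 : ℝ)..t, (exp (s • A) * C * (exp (s • A))ᵀ) i j) *ᵥ x) 0 =
      ∑ i ∈ Finset.range (p + 1), p.choose i • (x ⬝ᵥ (A ^ i * C * Aᵀ ^ (p - i)) *ᵥ x) := by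
  have hexp (s : ℝ) : (exp (s • A))ᵀ = exp (s • Aᵀ) := by
    rw [← exp_transpose, transpose_smul]
  have hcont : Continuous fun s : ℝ => exp (s • A) * C * exp (s • Aᵀ) :=
    continuous_iff_continuousAt.2 fun s =>
      (hasDerivAt_exp_smul_mul_mul_exp_smul A Aᵀ C s).continuousAt
  simp_rw [hexp, dotProduct_of_intervalIntegral_mulVec hcont]
  have hcont' : Continuous fun s : ℝ => x ⬝ᵥ (exp (s • A) * C * exp (s • Aᵀ)) *ᵥ x :=
    (quadFormCLM x).continuous.comp hcont
  rw [iteratedDeriv_succ_intervalIntegral hcont']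
  exact iteratedDeriv_exp_smul_mul_mul_exp_smul_zero (quadFormCLM x) A Aᵀ C p

end MatrixCalculus

theorem quadratic_form_taylor_vanishing_general (n K : ℕ)
    (Ω : Matrix (Fin n ⊕ Fin n) (Fin n ⊕ Fin n) ℝ)
    (F : Matrix (Fin n ⊕ Fin n) (Fin n ⊕ Fin n) ℝ)
    (l : Fin K → (Fin n ⊕ Fin n) → ℂ)
    (M : Matrix (Fin n ⊕ Fin n) (Fin n ⊕ Fin n) ℝ)
    (hM : M = ∑ k, (vecMulVec (fun i => (l k i).re) (fun i => (l k i).re)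
                  + vecMulVec (fun i => (l k i).im) (fun i => (l k i).im)))
    (N : Matrix (Fin n ⊕ Fin n) (Fin n ⊕ Fin n) ℝ)
    (hN : N = ∑ k, (vecMulVec (fun i => (l k i).re) (fun i => (l k i).im)
                  - vecMulVec (fun i => (l k i).im) (fun i => (l k i).re)))
    (A : Matrix (Fin n ⊕ Fin n) (Fin n ⊕ Fin n) ℝ) (hA : A = F + N * Ω)
    (V₀ : Submodule ℝ ((Fin n ⊕ Fin n) → ℝ))
    (hV₀ : V₀ = Submodule.span ℝ
      (Set.range (fun k => fun i => (l k i).re) ∪ Set.range (fun k => fun i => (l k i).im)))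
    (V : ℕ → Submodule ℝ ((Fin n ⊕ Fin n) → ℝ))
    (hV : ∀ j : ℕ, V j = ⨆ m ∈ Finset.range (j + 1), Submodule.map (F ^ m).mulVecLin V₀)
    (R : ℝ → Matrix (Fin n ⊕ Fin n) (Fin n ⊕ Fin n) ℝ)
    (hR : ∀ t, R t = NormedSpace.exp (t • A))
    (D : ℝ → Matrix (Fin n ⊕ Fin n) (Fin n ⊕ Fin n) ℝ)
    (hD : ∀ t, D t = Matrix.of fun i j => ∫ s in (0:ℝ)..t, (R s * M * (R s)ᵀ) i j)
    (k : ℕ)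
    (ξ : (Fin n ⊕ Fin n) → ℝ) (hξ : ∀ v ∈ V (k - 1), ξ ⬝ᵥ v = 0) :
    (∀ j : ℕ, j ≤ 2 * k →
      iteratedDeriv j (fun t => ξ ⬝ᵥ (D t).mulVec ξ) 0 = 0) ∧
    iteratedDeriv (2 * k + 1) (fun t => ξ ⬝ᵥ (D t).mulVec ξ) 0 =
      ((2 * k).choose k : ℝ) * (ξ ⬝ᵥ (F ^ k * M * (Fᵀ) ^ k).mulVec ξ) := by
  have hperp : ∀ i < k, ∀ κ, ξ ᵥ* F ^ i ⬝ᵥ (fun a => (l κ a).re) = 0 ∧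
      ξ ᵥ* F ^ i ⬝ᵥ (fun a => (l κ a).im) = 0 := by
    intro i hi κ
    have hmem {v} (hv : v ∈ V₀) : ξ ᵥ* F ^ i ⬝ᵥ v = 0 :=
      vecMul_pow_dotProduct_eq_zero (hV (k - 1) ▸ hξ) (by omega) hv
    exact ⟨hmem (hV₀ ▸ Submodule.subset_span (Or.inl ⟨κ, rfl⟩)),
      hmem (hV₀ ▸ Submodule.subset_span (Or.inr ⟨κ, rfl⟩))⟩
  have hFM : ∀ i < k, ξ ᵥ* F ^ i ᵥ* M = 0 := fun i hi => by
    simp [hM, vecMul_sum, vecMul_add, vecMul_vecMulVec, hperp i hi]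
  have hFN : ∀ i < k, ξ ᵥ* F ^ i ᵥ* (N * Ω) = 0 := fun i hi => by
    simp [hN, ← vecMul_vecMul, vecMul_sum, vecMul_sub, vecMul_vecMulVec, hperp i hi]
  have hAF : ∀ i ≤ k, ξ ᵥ* A ^ i = ξ ᵥ* F ^ i := hA ▸ vecMul_add_pow_of_vecMul_pow_mul_eq_zero hFN
  have hMsymm : Mᵀ = M := by
    simp [hM, transpose_sum, transpose_add, transpose_vecMulVec]
  have hT : ∀ i j, i < k ∨ j < k → ξ ⬝ᵥ (A ^ i * M * Aᵀ ^ j) *ᵥ ξ = 0 := fun i j =>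
    dotProduct_pow_mul_mul_transpose_pow_mulVec_eq_zero hMsymm
      fun i hi => by rw [hAF i hi.le, hFM i hi]
  have hderiv (p : ℕ) : iteratedDeriv (p + 1) (fun t => ξ ⬝ᵥ D t *ᵥ ξ) 0 =
      ∑ i ∈ Finset.range (p + 1), p.choose i • (ξ ⬝ᵥ (A ^ i * M * Aᵀ ^ (p - i)) *ᵥ ξ) := by
    simp only [hD, hR]
    exact iteratedDeriv_succ_quadForm_integral_exp A M ξ p
  refine ⟨fun j hj => ?_, ?_⟩
  · rcases j with _ | p
    · simp [hD, mulVec, dotProduct]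
    · rw [hderiv, Finset.sum_range_choose_smul_eq_zero hT (by omega)]
  · rw [hderiv, Finset.sum_range_choose_smul_eq_middle hT, nsmul_eq_mul, ← transpose_pow,
      ← transpose_pow, dotProduct_mul_mul_transpose_mulVec, dotProduct_mul_mul_transpose_mulVec,
      hAF k le_rfl]

/-- if `ξ ⊥ V_{k-1}` (k ≥ 1), the function `t ↦ ξ·D_t ξ` has vanishing
derivatives of all orders `j ≤ 2k` at `t = 0`, and its `(2k+1)`-st derivative at
`t = 0` equals `C(2k,k) ξᵀ Fᵏ M (Fᵀ)ᵏ ξ`. -/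
theorem quadratic_form_taylor_vanishing (n K : ℕ) (hn : 1 ≤ n)
    (Ω : Matrix (Fin n ⊕ Fin n) (Fin n ⊕ Fin n) ℝ)
    (hΩ : Ω = Matrix.fromBlocks 0 (-1) 1 0)
    (Q : Matrix (Fin n ⊕ Fin n) (Fin n ⊕ Fin n) ℝ) (hQ : Q.IsSymm)
    (F : Matrix (Fin n ⊕ Fin n) (Fin n ⊕ Fin n) ℝ) (hF : F = Ω * Q)
    (l : Fin K → (Fin n ⊕ Fin n) → ℂ)
    (M : Matrix (Fin n ⊕ Fin n) (Fin n ⊕ Fin n) ℝ)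
    (hM : M = ∑ k, (vecMulVec (fun i => (l k i).re) (fun i => (l k i).re)
                  + vecMulVec (fun i => (l k i).im) (fun i => (l k i).im)))
    (N : Matrix (Fin n ⊕ Fin n) (Fin n ⊕ Fin n) ℝ)
    (hN : N = ∑ k, (vecMulVec (fun i => (l k i).re) (fun i => (l k i).im)
                  - vecMulVec (fun i => (l k i).im) (fun i => (l k i).re)))
    (A : Matrix (Fin n ⊕ Fin n) (Fin n ⊕ Fin n) ℝ) (hA : A = F + N * Ω)
    (V₀ : Submodule ℝ ((Fin n ⊕ Fin n) → ℝ))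
    (hV₀ : V₀ = Submodule.span ℝ
      (Set.range (fun k => fun i => (l k i).re) ∪ Set.range (fun k => fun i => (l k i).im)))
    (V : ℕ → Submodule ℝ ((Fin n ⊕ Fin n) → ℝ))
    (hV : ∀ j : ℕ, V j = ⨆ m ∈ Finset.range (j + 1), Submodule.map (F ^ m).mulVecLin V₀)
    (R : ℝ → Matrix (Fin n ⊕ Fin n) (Fin n ⊕ Fin n) ℝ)
    (hR : ∀ t, R t = NormedSpace.exp (t • A))
    (D : ℝ → Matrix (Fin n ⊕ Fin n) (Fin n ⊕ Fin n) ℝ)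
    (hD : ∀ t, D t = Matrix.of fun i j => ∫ s in (0:ℝ)..t, (R s * M * (R s)ᵀ) i j)
    (k : ℕ) (hk : 1 ≤ k)
    (ξ : (Fin n ⊕ Fin n) → ℝ) (hξ : ∀ v ∈ V (k - 1), ξ ⬝ᵥ v = 0) :
    (∀ j : ℕ, j ≤ 2 * k →
      iteratedDeriv j (fun t => ξ ⬝ᵥ (D t).mulVec ξ) 0 = 0) ∧
    iteratedDeriv (2 * k + 1) (fun t => ξ ⬝ᵥ (D t).mulVec ξ) 0 =
      ((2 * k).choose k : ℝ) * (ξ ⬝ᵥ (F ^ k * M * (Fᵀ) ^ k).mulVec ξ) :=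
  quadratic_form_taylor_vanishing_general n K Ω F l M hM N hN A hA V₀ hV₀ V hV R hR D hD k ξ hξ
end

section
/- For every t ≥ 0, the orthogonal complement of V_{2n−1} is contained in the kernel of D_t: if ξ ⊥ V_{2n−1} then ξ·D_t ξ = 0 (equivalently D_t ξ = 0, since D_t is positive semidefinite). In particular, if the Hörmander condition fails then D_t is degenerate for every t ≥ 0. -/
/-!
`V_{2n-1}` is the Krylov space of `F` generated by `V₀`, so by Cayley–Hamilton it is
`F`-invariant. The range of `N` lies in `V₀`, hence `V_{2n-1}` is also invariant under
`A = F + NΩ` and under every `R_s = exp (sA)`. If `ξ ⊥ V_{2n-1}`, then `R_sᵀ ξ ⊥ V_{2n-1} ⊇ V₀`,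
and `M` annihilates such vectors; so the integrand `R_s M R_sᵀ` of `D_t` kills `ξ` for every `s`.
-/

open Matrix MeasureTheory intervalIntegral

section Krylov

open Polynomial

variable {R ι : Type*} [CommRing R] [Fintype ι] [DecidableEq ι]

def krylov (F : Matrix ι ι R) (V₀ : Submodule R (ι → R)) (j : ℕ) : Submodule R (ι → R) :=
  ⨆ m ∈ Finset.range (j + 1), V₀.map (F ^ m).mulVecLin

variable {F : Matrix ι ι R} {V₀ : Submodule R (ι → R)} {j : ℕ}

theorem pow_mulVec_mem_krylov {m : ℕ} (hm : m ≤ j) {v : ι → R} (hv : v ∈ V₀) :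
    (F ^ m) *ᵥ v ∈ krylov F V₀ j :=
  (le_iSup₂ (f := fun m (_ : m ∈ Finset.range (j + 1)) => V₀.map (F ^ m).mulVecLin) m
    (Finset.mem_range_succ_iff.2 hm)) (Submodule.mem_map_of_mem hv)

theorem le_krylov : V₀ ≤ krylov F V₀ j := fun v hv => by
  simpa using pow_mulVec_mem_krylov (F := F) (Nat.zero_le j) hv

theorem aeval_mulVec_mem_krylov {p : R[X]} (hp : p.natDegree ≤ j) {v : ι → R} (hv : v ∈ V₀) :
    aeval F p *ᵥ v ∈ krylov F V₀ j := by
  rw [aeval_eq_sum_range, sum_mulVec]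
  refine Submodule.sum_mem _ fun i hi => ?_
  rw [smul_mulVec]
  exact Submodule.smul_mem _ _
    (pow_mulVec_mem_krylov (by have := Finset.mem_range.1 hi; omega) hv)

/-- By Cayley–Hamilton every power of `F` is a polynomial in `F` of degree `< card ι`. -/
theorem pow_mulVec_mem_krylov_of_card_le (hj : Fintype.card ι ≤ j + 1) (m : ℕ) {v : ι → R}
    (hv : v ∈ V₀) : (F ^ m) *ᵥ v ∈ krylov F V₀ j := by
  nontriviality R
  rw [pow_eq_aeval_mod_charpoly]
  refine aeval_mulVec_mem_krylov ?_ hv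
  rcases eq_or_ne F.charpoly 1 with h | h
  · simp [h]
  · have := natDegree_modByMonic_lt (X ^ m) F.charpoly_monic h
    rw [charpoly_natDegree_eq_dim] at this
    omega

theorem mulVec_mem_krylov_of_card_le (hj : Fintype.card ι ≤ j + 1) {u : ι → R}
    (hu : u ∈ krylov F V₀ j) : F *ᵥ u ∈ krylov F V₀ j := by
  suffices krylov F V₀ j ≤ (krylov F V₀ j).comap F.mulVecLin from this hu
  refine iSup₂_le fun m _ => ?_
  rintro _ ⟨v, hv, rfl⟩
  simpa [mulVec_mulVec, ← pow_succ'] using pow_mulVec_mem_krylov_of_card_le hj (m + 1) hv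

end Krylov

section Exp

variable {R ι : Type*} [CommRing R] [Fintype ι] [DecidableEq ι]

def invtSubalgebra (W : Submodule R (ι → R)) : Subalgebra R (Matrix ι ι R) where
  carrier := {X | ∀ u ∈ W, X *ᵥ u ∈ W}
  mul_mem' hX hY u hu := by simpa only [← mulVec_mulVec] using hX _ (hY u hu)
  add_mem' hX hY u hu := by simpa only [add_mulVec] using add_mem (hX u hu) (hY u hu)
  algebraMap_mem' c u hu := by
    simpa only [Algebra.algebraMap_eq_smul_one, smul_mulVec, one_mulVec] using W.smul_mem c hu

theorem isClosed_invtSubalgebra [TopologicalSpace R] [IsTopologicalRing R]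
    {W : Submodule R (ι → R)} (hW : IsClosed (W : Set (ι → R))) :
    IsClosed (invtSubalgebra W : Set (Matrix ι ι R)) := by
  have : (invtSubalgebra W : Set (Matrix ι ι R)) = ⋂ u ∈ W, (· *ᵥ u) ⁻¹' W := by
    ext X; simp [invtSubalgebra]
  rw [this]
  exact isClosed_biInter fun u _ => hW.preimage (continuous_id.matrix_mulVec continuous_const)

theorem exp_mulVec_mem {𝕂 : Type*} [RCLike 𝕂] {A : Matrix ι ι 𝕂} {W : Submodule 𝕂 (ι → 𝕂)}
    (hW : ∀ u ∈ W, A *ᵥ u ∈ W) {u : ι → 𝕂} (hu : u ∈ W) : NormedSpace.exp A *ᵥ u ∈ W :=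
  NormedSpace.exp_mem (R := 𝕂) (isClosed_invtSubalgebra W.closed_of_finiteDimensional) hW u hu

end Exp

theorem continuous_exp_matrix {ι : Type*} [Fintype ι] [DecidableEq ι] :
    Continuous (NormedSpace.exp : Matrix ι ι ℝ → Matrix ι ι ℝ) := by
  let _ : NormedRing (Matrix ι ι ℝ) := Matrix.linftyOpNormedRing
  let _ : NormedAlgebra ℝ (Matrix ι ι ℝ) := Matrix.linftyOpNormedAlgebra
  let _ : NormedAlgebra ℚ (Matrix ι ι ℝ) := NormedAlgebra.restrictScalars ℚ ℝ _
  exact NormedSpace.exp_continuous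

section RankOne

variable {R m n : Type*} [CommRing R] [Fintype n]

theorem vecMulVec_mulVec_mem {W : Submodule R (m → R)} {u : m → R} (hu : u ∈ W) (v x : n → R) :
    vecMulVec u v *ᵥ x ∈ W := by
  simpa [vecMulVec_mulVec] using W.smul_mem (v ⬝ᵥ x) hu

theorem vecMulVec_mulVec_eq_zero (u : m → R) {v x : n → R} (h : v ⬝ᵥ x = 0) :
    vecMulVec u v *ᵥ x = 0 := by
  simp [vecMulVec_mulVec, h]

end RankOne

theorem transpose_mulVec_dotProduct_eq_zero {R ι : Type*} [CommRing R] [Fintype ι]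
    {W : Submodule R (ι → R)} {B : Matrix ι ι R} (hB : ∀ u ∈ W, B *ᵥ u ∈ W) {ξ : ι → R}
    (hξ : ∀ v ∈ W, ξ ⬝ᵥ v = 0) : ∀ v ∈ W, v ⬝ᵥ Bᵀ *ᵥ ξ = 0 := fun v hv => by
  rw [dotProduct_mulVec, vecMul_transpose, dotProduct_comm]
  exact hξ _ (hB v hv)

theorem exists_ne_zero_forall_dotProduct_eq_zero {K ι : Type*} [Field K] [Fintype ι]
    [DecidableEq ι] {W : Submodule K (ι → K)} (hW : W ≠ ⊤) :
    ∃ ξ ≠ 0, ∀ v ∈ W, ξ ⬝ᵥ v = 0 := by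
  obtain ⟨f, hf, hWf⟩ := Submodule.exists_dual_map_eq_bot_of_lt_top hW.lt_top inferInstance
  refine ⟨(dotProductEquiv K ι).symm f, by simpa using hf, fun v hv => ?_⟩
  have hfv : f v ∈ W.map f := Submodule.mem_map_of_mem hv
  rw [hWf, Submodule.mem_bot, ← (dotProductEquiv K ι).apply_symm_apply f] at hfv
  exact hfv

theorem of_intervalIntegral_mulVec_eq_zero {m n : Type*} [Fintype n] {G : ℝ → Matrix m n ℝ}
    {a b : ℝ} (hG : ∀ i j, IntervalIntegrable (fun s => G s i j) volume a b) {ξ : n → ℝ}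
    (h : ∀ s, G s *ᵥ ξ = 0) : (of fun i j => ∫ s in a..b, G s i j) *ᵥ ξ = 0 := by
  funext i
  have hrow : ∀ s, ∑ j, G s i j * ξ j = 0 := fun s => congrFun (h s) i
  simp only [mulVec, dotProduct, of_apply, ← intervalIntegral.integral_mul_const]
  rw [← integral_finsetSum fun j _ => (hG i j).mul_const (ξ j)]
  simp [hrow]

section Gramian

variable {ι : Type*} [Fintype ι] [DecidableEq ι]

noncomputable def gramian (A M : Matrix ι ι ℝ) (t : ℝ) : Matrix ι ι ℝ :=
  of fun i j => ∫ s in (0 : ℝ)..t,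
    (NormedSpace.exp (s • A) * M * (NormedSpace.exp (s • A))ᵀ) i j

theorem gramian_mulVec_eq_zero {A M : Matrix ι ι ℝ} {W : Submodule ℝ (ι → ℝ)}
    (hA : ∀ u ∈ W, A *ᵥ u ∈ W) (hM : ∀ y, (∀ v ∈ W, v ⬝ᵥ y = 0) → M *ᵥ y = 0)
    {ξ : ι → ℝ} (hξ : ∀ v ∈ W, ξ ⬝ᵥ v = 0) (t : ℝ) : gramian A M t *ᵥ ξ = 0 := by
  have hexp : Continuous fun s : ℝ => NormedSpace.exp (s • A) :=
    continuous_exp_matrix.comp (continuous_id.smul continuous_const)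
  refine of_intervalIntegral_mulVec_eq_zero (fun i j => Continuous.intervalIntegrable
    (((hexp.matrix_mul continuous_const).matrix_mul hexp.matrix_transpose).matrix_elem i j)
      _ _) fun s => ?_
  have hsA : ∀ u ∈ W, (s • A) *ᵥ u ∈ W := fun u hu => by
    simpa [smul_mulVec] using W.smul_mem s (hA u hu)
  rw [← mulVec_mulVec, ← mulVec_mulVec,
    hM _ (transpose_mulVec_dotProduct_eq_zero (fun u => exp_mulVec_mem hsA) hξ), mulVec_zero]

end Gramian

theorem perp_in_kernel_of_Dt_general (n K : ℕ)
    (Ω : Matrix (Fin n ⊕ Fin n) (Fin n ⊕ Fin n) ℝ)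
    (F : Matrix (Fin n ⊕ Fin n) (Fin n ⊕ Fin n) ℝ)
    (l : Fin K → (Fin n ⊕ Fin n) → ℂ)
    (M : Matrix (Fin n ⊕ Fin n) (Fin n ⊕ Fin n) ℝ)
    (hM : M = ∑ k, (vecMulVec (fun i => (l k i).re) (fun i => (l k i).re)
                  + vecMulVec (fun i => (l k i).im) (fun i => (l k i).im)))
    (N : Matrix (Fin n ⊕ Fin n) (Fin n ⊕ Fin n) ℝ)
    (hN : N = ∑ k, (vecMulVec (fun i => (l k i).re) (fun i => (l k i).im)
                  - vecMulVec (fun i => (l k i).im) (fun i => (l k i).re)))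
    (A : Matrix (Fin n ⊕ Fin n) (Fin n ⊕ Fin n) ℝ) (hA : A = F + N * Ω)
    (V₀ : Submodule ℝ ((Fin n ⊕ Fin n) → ℝ))
    (hV₀ : V₀ = Submodule.span ℝ
      (Set.range (fun k => fun i => (l k i).re) ∪ Set.range (fun k => fun i => (l k i).im)))
    (V : ℕ → Submodule ℝ ((Fin n ⊕ Fin n) → ℝ))
    (hV : ∀ j : ℕ, V j = ⨆ m ∈ Finset.range (j + 1), Submodule.map (F ^ m).mulVecLin V₀)
    (R : ℝ → Matrix (Fin n ⊕ Fin n) (Fin n ⊕ Fin n) ℝ)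
    (hR : ∀ t, R t = NormedSpace.exp (t • A))
    (D : ℝ → Matrix (Fin n ⊕ Fin n) (Fin n ⊕ Fin n) ℝ)
    (hD : ∀ t, D t = Matrix.of fun i j => ∫ s in (0:ℝ)..t, (R s * M * (R s)ᵀ) i j)
    :
    (∀ t : ℝ, 0 ≤ t → ∀ ξ : (Fin n ⊕ Fin n) → ℝ, (∀ v ∈ V (2 * n - 1), ξ ⬝ᵥ v = 0) →
      ξ ⬝ᵥ (D t).mulVec ξ = 0 ∧ (D t).mulVec ξ = 0) ∧
    (V (2 * n - 1) ≠ ⊤ →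
      ∀ t : ℝ, 0 ≤ t → ∃ ξ : (Fin n ⊕ Fin n) → ℝ, ξ ≠ 0 ∧ (D t).mulVec ξ = 0) := by
  obtain rfl : V = krylov F V₀ := funext hV
  obtain rfl : D = gramian A M := funext fun t => by simp only [hD, hR, gramian]
  set W := krylov F V₀ (2 * n - 1)
  have hre : ∀ k, (fun i => (l k i).re) ∈ W := fun k =>
    le_krylov (hV₀ ▸ Submodule.subset_span (.inl ⟨k, rfl⟩))
  have him : ∀ k, (fun i => (l k i).im) ∈ W := fun k =>
    le_krylov (hV₀ ▸ Submodule.subset_span (.inr ⟨k, rfl⟩))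
  have hFW : ∀ u ∈ W, F *ᵥ u ∈ W := fun _ =>
    mulVec_mem_krylov_of_card_le (by simp only [Fintype.card_sum, Fintype.card_fin]; omega)
  have hAW : ∀ u ∈ W, A *ᵥ u ∈ W := fun u hu => by
    rw [hA, add_mulVec, ← mulVec_mulVec, hN, sum_mulVec]
    refine add_mem (hFW u hu) (Submodule.sum_mem _ fun k _ => ?_)
    rw [sub_mulVec]
    exact sub_mem (vecMulVec_mulVec_mem (hre k) _ _) (vecMulVec_mulVec_mem (him k) _ _)
  have hMW : ∀ y, (∀ v ∈ W, v ⬝ᵥ y = 0) → M *ᵥ y = 0 := fun y hy => by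
    rw [hM, sum_mulVec]
    refine Finset.sum_eq_zero fun k _ => ?_
    rw [add_mulVec, vecMulVec_mulVec_eq_zero _ (hy _ (hre k)),
      vecMulVec_mulVec_eq_zero _ (hy _ (him k)), add_zero]
  refine ⟨fun t _ ξ hξ => ?_, fun hW t _ => ?_⟩
  · rw [gramian_mulVec_eq_zero hAW hMW hξ t, dotProduct_zero]
    exact ⟨rfl, rfl⟩
  · obtain ⟨ξ, hξ0, hξ⟩ := exists_ne_zero_forall_dotProduct_eq_zero hW
    exact ⟨ξ, hξ0, gramian_mulVec_eq_zero hAW hMW hξ t⟩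

/-- for every `t ≥ 0`, `V_{2n-1}^⊥ ⊆ ker D_t`: if `ξ ⊥ V_{2n-1}` then
`ξ·D_t ξ = 0` and `D_t ξ = 0`. In particular, if the Hörmander condition
`V_{2n-1} = ℝ^{2n}` fails then `D_t` is degenerate for every `t ≥ 0`. -/
theorem perp_in_kernel_of_Dt (n K : ℕ) (hn : 1 ≤ n)
    (Ω : Matrix (Fin n ⊕ Fin n) (Fin n ⊕ Fin n) ℝ)
    (hΩ : Ω = Matrix.fromBlocks 0 (-1) 1 0)
    (Q : Matrix (Fin n ⊕ Fin n) (Fin n ⊕ Fin n) ℝ) (hQ : Q.IsSymm)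
    (F : Matrix (Fin n ⊕ Fin n) (Fin n ⊕ Fin n) ℝ) (hF : F = Ω * Q)
    (l : Fin K → (Fin n ⊕ Fin n) → ℂ)
    (M : Matrix (Fin n ⊕ Fin n) (Fin n ⊕ Fin n) ℝ)
    (hM : M = ∑ k, (vecMulVec (fun i => (l k i).re) (fun i => (l k i).re)
                  + vecMulVec (fun i => (l k i).im) (fun i => (l k i).im)))
    (N : Matrix (Fin n ⊕ Fin n) (Fin n ⊕ Fin n) ℝ)
    (hN : N = ∑ k, (vecMulVec (fun i => (l k i).re) (fun i => (l k i).im)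
                  - vecMulVec (fun i => (l k i).im) (fun i => (l k i).re)))
    (A : Matrix (Fin n ⊕ Fin n) (Fin n ⊕ Fin n) ℝ) (hA : A = F + N * Ω)
    (V₀ : Submodule ℝ ((Fin n ⊕ Fin n) → ℝ))
    (hV₀ : V₀ = Submodule.span ℝ
      (Set.range (fun k => fun i => (l k i).re) ∪ Set.range (fun k => fun i => (l k i).im)))
    (V : ℕ → Submodule ℝ ((Fin n ⊕ Fin n) → ℝ))
    (hV : ∀ j : ℕ, V j = ⨆ m ∈ Finset.range (j + 1), Submodule.map (F ^ m).mulVecLin V₀)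
    (R : ℝ → Matrix (Fin n ⊕ Fin n) (Fin n ⊕ Fin n) ℝ)
    (hR : ∀ t, R t = NormedSpace.exp (t • A))
    (D : ℝ → Matrix (Fin n ⊕ Fin n) (Fin n ⊕ Fin n) ℝ)
    (hD : ∀ t, D t = Matrix.of fun i j => ∫ s in (0:ℝ)..t, (R s * M * (R s)ᵀ) i j)
    :
    (∀ t : ℝ, 0 ≤ t → ∀ ξ : (Fin n ⊕ Fin n) → ℝ, (∀ v ∈ V (2 * n - 1), ξ ⬝ᵥ v = 0) →
      ξ ⬝ᵥ (D t).mulVec ξ = 0 ∧ (D t).mulVec ξ = 0) ∧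
    (V (2 * n - 1) ≠ ⊤ →
      ∀ t : ℝ, 0 ≤ t → ∃ ξ : (Fin n ⊕ Fin n) → ℝ, ξ ≠ 0 ∧ (D t).mulVec ξ = 0) :=
  perp_in_kernel_of_Dt_general n K Ω F l M hM N hN A hA V₀ hV₀ V hV R hR D hD
end
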